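/- Let A = [[2, 0], [0, 1]] and C = [[2, 1], [1, 1]] as operators on ℂ². There exists a bounded operator U ∈ B(ℂ²) satisfying |⟨Ux, y⟩| ≤ ‖x‖‖y‖ + ‖Ax‖‖y‖ + ‖Cx‖‖y‖ for all x, y ∈ ℂ², such that U admits no decomposition U = U₁ + U₂ + U₃ with operators U₁, U₂, U₃ ∈ B(ℂ²) satisfying |⟨U₁x, y⟩| ≤ ‖x‖‖y‖, |⟨U₂x, y⟩| ≤ ‖Ax‖‖y‖, and |⟨U₃x, y⟩| ≤ ‖Cx‖‖y‖ for all x, y ∈ ℂ². In particular, a bilinear form majorized by a sum of the moduli of three bounded forms need not decompose as a sum of three forms each majorized by the corresponding term. -/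

import Mathlib

/-!
At `e₀` the majorant `‖x‖ + ‖Ax‖ + ‖Cx‖` equals `1 + 2 + √5 = ⟪e₀, U e₀⟫`, so in any
decomposition all the estimates are equalities there; in particular `U₃ e₀ = √5 e₀` and
`‖U₃ e₀‖ = ‖C e₀‖`. Since `‖U₃ x‖ ≤ ‖C x‖` everywhere, the first variation at `e₀` vanishes:
`⟪U₃ e₀, U₃ e₁⟫ = ⟪C e₀, C e₁⟫ = 3`. Hence `U₃ e₁` has first coordinate `3/√5`, and
`‖U₃ e₁‖ ≤ ‖C e₁‖ = √2` leaves at most `1/√5` for its second one. The entry `49/20` of `U`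
exceeds `1 + 1 + 1/√5`, a contradiction.

The majorization itself is a real inequality in `|x₀|`, `|x₁|` and `Re (x₀ x̄₁)`: after squaring,
the three cross terms `‖x‖‖Ax‖`, `‖x‖‖Cx‖`, `‖Ax‖‖Cx‖` are bounded below by Cauchy–Schwarz type
estimates, one of which has to be sharpened slightly, differently for `|x₁| ≤ 2|x₀|` and
`|x₁| ≥ 2|x₀|`.
-/

/-- The operator on `ℂ²` given by the matrix `[[2, 0], [0, 1]]`. -/
noncomputable def opA : EuclideanSpace ℂ (Fin 2) →L[ℂ] EuclideanSpace ℂ (Fin 2) :=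
  Matrix.toEuclideanCLM (𝕜 := ℂ) !![2, 0; 0, 1]

/-- The operator on `ℂ²` given by the matrix `[[2, 1], [1, 1]]`. -/
noncomputable def opC : EuclideanSpace ℂ (Fin 2) →L[ℂ] EuclideanSpace ℂ (Fin 2) :=
  Matrix.toEuclideanCLM (𝕜 := ℂ) !![2, 1; 1, 1]

open RCLike ComplexConjugate

section InnerProduct

variable {𝕜 E F G : Type*} [RCLike 𝕜]
  [NormedAddCommGroup E] [InnerProductSpace 𝕜 E]
  [NormedAddCommGroup F] [InnerProductSpace 𝕜 F]
  [NormedAddCommGroup G] [InnerProductSpace 𝕜 G]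

local notation "⟪" x ", " y "⟫" => inner 𝕜 x y

theorem norm_le_of_forall_norm_inner_le {u : E} {b : ℝ} (hb : 0 ≤ b)
    (h : ∀ y, ‖⟪u, y⟫‖ ≤ b * ‖y‖) : ‖u‖ ≤ b := by
  rcases (norm_nonneg u).eq_or_lt' with hu | hu
  · exact hu ▸ hb
  · have : ‖u‖ ^ 2 ≤ b * ‖u‖ := by
      rw [← inner_self_eq_norm_sq (𝕜 := 𝕜)]
      exact (re_le_norm _).trans (h u)
    nlinarith

theorem eq_zero_of_forall_re_mul_le {d : 𝕜} {κ : ℝ} (h : ∀ t : 𝕜, re (t * d) ≤ κ * ‖t‖ ^ 2) :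
    d = 0 := by
  set ε : ℝ := 1 / (|κ| + 1)
  have hε : 0 < ε := by positivity
  have hκε : κ * ε < 1 := by
    calc κ * ε ≤ |κ| * ε := by gcongr; exact le_abs_self κ
      _ < 1 := by rw [mul_one_div, div_lt_one (by positivity)]; linarith
  have key := h ((ε : 𝕜) * conj d)
  rw [mul_assoc, RCLike.conj_mul, ← ofReal_pow, ← ofReal_mul, ofReal_re, norm_mul, norm_conj,
    norm_ofReal, abs_of_pos hε] at key
  have : ‖d‖ ^ 2 ≤ 0 := by nlinarith [mul_pos hε (sub_pos.2 hκε), sq_nonneg ‖d‖]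
  simpa using this

theorem inner_map_map_eq_of_norm_le_of_norm_eq {T : E →L[𝕜] F} {S : E →L[𝕜] G}
    (hle : ∀ x, ‖T x‖ ≤ ‖S x‖) {v : E} (heq : ‖T v‖ = ‖S v‖) (w : E) :
    ⟪T v, T w⟫ = ⟪S v, S w⟫ := by
  rw [← sub_eq_zero]
  refine eq_zero_of_forall_re_mul_le (κ := ‖S w‖ ^ 2 / 2) fun t => ?_
  have h := pow_le_pow_left₀ (norm_nonneg _) (hle (v + t • w)) 2
  simp only [map_add, map_smul, norm_add_sq (𝕜 := 𝕜), inner_smul_right, norm_smul, mul_pow,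
    heq] at h
  rw [mul_sub, map_sub]
  nlinarith [mul_nonneg (sq_nonneg ‖t‖) (sq_nonneg ‖T w‖)]

theorem eq_smul_of_norm_le_of_re_inner_eq {u v : E} {a : ℝ} (hu : ‖u‖ = 1) (hv : ‖v‖ ≤ a)
    (h : re ⟪u, v⟫ = a) : v = (a : 𝕜) • u := by
  have ha : 0 ≤ a := (norm_nonneg v).trans hv
  have hsq : ‖v - (a : 𝕜) • u‖ ^ 2 ≤ 0 := by
    rw [norm_sub_sq (𝕜 := 𝕜), inner_smul_right, re_ofReal_mul, inner_re_symm, h, norm_smul,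
      norm_ofReal, abs_of_nonneg ha, hu]
    nlinarith [pow_le_pow_left₀ (norm_nonneg v) hv 2]
  simpa [sub_eq_zero] using hsq

end InnerProduct

theorem le_sqrt_mul_sqrt {t a b : ℝ} (ha : 0 ≤ a) (h : t ^ 2 ≤ a * b) : t ≤ √a * √b := by
  rw [← Real.sqrt_mul ha]
  exact Real.le_sqrt_of_sq_le h

theorem sqrt_five_mem_Ioo : √5 ∈ Set.Ioo 2.2357 2.24 := by
  constructor
  · rw [Real.lt_sqrt (by norm_num)]; norm_num
  · rw [Real.sqrt_lt' (by norm_num)]; norm_num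

namespace CounterexampleThreeTerms

/- With `p = |x₀|`, `q = |x₁|`, `s = Re (x₀ x̄₁)`, the radicands below are `‖x‖²`, `‖Ax‖²`
and `‖Cx‖²`; the suffixes `id`, `A`, `C` of the lemma names refer to these factors. -/
section RealInequality

variable {p q s : ℝ}

theorem le_sqrt_mul_sqrt_id_A : 2 * p ^ 2 + q ^ 2 ≤ √(p ^ 2 + q ^ 2) * √(4 * p ^ 2 + q ^ 2) :=
  le_sqrt_mul_sqrt (by positivity) (by nlinarith [sq_nonneg (p * q)])

theorem le_sqrt_mul_sqrt_id_A_of_le (hp : 0 ≤ p) (hq : 0 ≤ q) (hqp : q ≤ 2 * p) :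
    2 * p ^ 2 + 101 / 100 * q ^ 2 ≤ √(p ^ 2 + q ^ 2) * √(4 * p ^ 2 + q ^ 2) :=
  le_sqrt_mul_sqrt (by positivity) (by
    nlinarith [mul_nonneg (mul_nonneg hp hq) (mul_nonneg hp hq),
      mul_nonneg (sq_nonneg q) (mul_nonneg (sub_nonneg.2 hqp) (by linarith : 0 ≤ 2 * p + q))])

theorem le_sqrt_mul_sqrt_id_C (hs : |s| ≤ p * q) :
    √5 / 5 * (5 * p ^ 2 + q ^ 2 + 3 * s) ≤
      √(p ^ 2 + q ^ 2) * √(5 * p ^ 2 + 2 * q ^ 2 + 6 * s) := by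
  obtain ⟨hs₁, hs₂⟩ := abs_le.1 hs
  refine le_sqrt_mul_sqrt (by positivity) ?_
  rw [mul_pow, div_pow, Real.sq_sqrt (by norm_num)]
  nlinarith [mul_nonneg (sub_nonneg.2 hs₂) (neg_le_iff_add_nonneg.1 hs₁),
    mul_nonneg (sq_nonneg q) (neg_le_iff_add_nonneg'.1 hs₁),
    mul_nonneg (sq_nonneg q) (sq_nonneg (4 * p - 3 * q))]

theorem le_sqrt_mul_sqrt_id_C_of_le (hp : 0 ≤ p) (hs : |s| ≤ p * q) (hpq : 2 * p ≤ q) :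
    √5 / 5 * (5 * p ^ 2 + q ^ 2 + 3 * s) + 7 / 1000 * q ^ 2 ≤
      √(p ^ 2 + q ^ 2) * √(5 * p ^ 2 + 2 * q ^ 2 + 6 * s) := by
  obtain ⟨hs₁, hs₂⟩ := abs_le.1 hs
  have hr := sqrt_five_mem_Ioo.2
  have hX₀ : 0 ≤ 5 * p ^ 2 + q ^ 2 + 3 * s := by nlinarith [sq_nonneg (10 * p - 3 * q)]
  have hX : 5 * p ^ 2 + q ^ 2 + 3 * s ≤ 15 / 4 * q ^ 2 := by nlinarith
  refine le_sqrt_mul_sqrt (by positivity) ?_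
  rw [add_sq, mul_pow, div_pow, Real.sq_sqrt (by norm_num)]
  nlinarith [mul_nonneg (sub_nonneg.2 hs₂) (neg_le_iff_add_nonneg.1 hs₁),
    mul_nonneg (sq_nonneg q) (neg_le_iff_add_nonneg'.1 hs₁),
    mul_nonneg (mul_nonneg hX₀ (sq_nonneg q)) (by linarith : (0 : ℝ) ≤ 2.24 - √5),
    mul_nonneg (sq_nonneg q) (mul_nonneg (sub_nonneg.2 hpq) (by linarith : 0 ≤ q - p)),
    mul_nonneg (sub_nonneg.2 hX) (sq_nonneg q)]

theorem le_sqrt_mul_sqrt_A_C (hs : |s| ≤ p * q) :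
    √5 / 5 * (10 * p ^ 2 + q ^ 2 + 6 * s) ≤
      √(4 * p ^ 2 + q ^ 2) * √(5 * p ^ 2 + 2 * q ^ 2 + 6 * s) := by
  obtain ⟨hs₁, hs₂⟩ := abs_le.1 hs
  refine le_sqrt_mul_sqrt (by positivity) ?_
  rw [mul_pow, div_pow, Real.sq_sqrt (by norm_num)]
  nlinarith [mul_nonneg (sub_nonneg.2 hs₂) (neg_le_iff_add_nonneg.1 hs₁),
    mul_nonneg (sq_nonneg q) (neg_le_iff_add_nonneg'.1 hs₁),
    mul_nonneg (sq_nonneg q) (sq_nonneg (p - q))]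

theorem sqrt_le_sum_sqrt (hp : 0 ≤ p) (hq : 0 ≤ q) (hs : |s| ≤ p * q) :
    √((14 + 6 * √5) * p ^ 2 + 3121 / 400 * q ^ 2 + (6 + 18 * √5 / 5) * s) ≤
      √(p ^ 2 + q ^ 2) + √(4 * p ^ 2 + q ^ 2) + √(5 * p ^ 2 + 2 * q ^ 2 + 6 * s) := by
  have hr := sqrt_five_mem_Ioo.1
  have hC : 0 ≤ 5 * p ^ 2 + 2 * q ^ 2 + 6 * s := by
    nlinarith [sq_nonneg (5 * p - 3 * q), neg_le_of_abs_le hs]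
  have e₁ := Real.sq_sqrt (by positivity : 0 ≤ p ^ 2 + q ^ 2)
  have e₂ := Real.sq_sqrt (by positivity : 0 ≤ 4 * p ^ 2 + q ^ 2)
  have e₃ := Real.sq_sqrt hC
  have hAC := le_sqrt_mul_sqrt_A_C hs
  rw [Real.sqrt_le_iff]
  refine ⟨by positivity, ?_⟩
  rcases le_total q (2 * p) with hqp | hpq
  · have hidA := le_sqrt_mul_sqrt_id_A_of_le hp hq hqp
    have hidC := le_sqrt_mul_sqrt_id_C hs
    nlinarith [mul_nonneg (sq_nonneg q) (by linarith : (0 : ℝ) ≤ √5 - 2.2357)]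
  · have hidA := le_sqrt_mul_sqrt_id_A (p := p) (q := q)
    have hidC := le_sqrt_mul_sqrt_id_C_of_le hp hs hpq
    nlinarith [mul_nonneg (sq_nonneg q) (by linarith : (0 : ℝ) ≤ √5 - 2.2357)]

end RealInequality

local notation "E" => EuclideanSpace ℂ (Fin 2)
local notation "e₀" => EuclideanSpace.single (0 : Fin 2) (1 : ℂ)
local notation "e₁" => EuclideanSpace.single (1 : Fin 2) (1 : ℂ)

theorem toEuclideanCLM_fin_two_apply_zero (a b c d : ℂ) (x : E) :
    Matrix.toEuclideanCLM (𝕜 := ℂ) !![a, b; c, d] x 0 = a * x 0 + b * x 1 := by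
  simp [Matrix.mulVec, dotProduct, Fin.sum_univ_two]

theorem toEuclideanCLM_fin_two_apply_one (a b c d : ℂ) (x : E) :
    Matrix.toEuclideanCLM (𝕜 := ℂ) !![a, b; c, d] x 1 = c * x 0 + d * x 1 := by
  simp [Matrix.mulVec, dotProduct, Fin.sum_univ_two]

theorem norm_sq_fin_two (x : E) : ‖x‖ ^ 2 = ‖x 0‖ ^ 2 + ‖x 1‖ ^ 2 := by
  simp [EuclideanSpace.norm_sq_eq, Fin.sum_univ_two]

theorem norm_sq_ofReal_mul_add (a b : ℝ) (z w : ℂ) :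
    ‖(a : ℂ) * z + b * w‖ ^ 2 =
      a ^ 2 * ‖z‖ ^ 2 + b ^ 2 * ‖w‖ ^ 2 + 2 * (a * b) * (z * conj w).re := by
  simp only [Complex.sq_norm, Complex.normSq_add, Complex.normSq_ofReal,
    map_mul, Complex.conj_ofReal]
  have : (a : ℂ) * z * ((b : ℂ) * conj w) = ((a * b : ℝ) : ℂ) * (z * conj w) := by
    push_cast; ring
  rw [this, Complex.re_ofReal_mul]
  ring

theorem norm_sq_toEuclideanCLM_ofReal (a b c d : ℝ) (x : E) :
    ‖Matrix.toEuclideanCLM (𝕜 := ℂ) !![(a : ℂ), b; c, d] x‖ ^ 2 =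
      (a ^ 2 + c ^ 2) * ‖x 0‖ ^ 2 + (b ^ 2 + d ^ 2) * ‖x 1‖ ^ 2
        + 2 * (a * b + c * d) * (x 0 * conj (x 1)).re := by
  rw [norm_sq_fin_two, toEuclideanCLM_fin_two_apply_zero, toEuclideanCLM_fin_two_apply_one,
    norm_sq_ofReal_mul_add, norm_sq_ofReal_mul_add]
  ring

/- `3 + √5 = ‖e₀‖ + ‖A e₀‖ + ‖C e₀‖`, and `49/20` just exceeds the bound `2 + 1/√5` that any
decomposition forces on the `(1, 1)` entry. -/
noncomputable def opU : E →L[ℂ] E :=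
  Matrix.toEuclideanCLM (𝕜 := ℂ) !![3 + √5, 3 * √5 / 5; 0, 49 / 20]

theorem norm_sq_opA (x : E) : ‖opA x‖ ^ 2 = 4 * ‖x 0‖ ^ 2 + ‖x 1‖ ^ 2 := by
  have := norm_sq_toEuclideanCLM_ofReal 2 0 0 1 x
  push_cast at this
  rw [opA, this]
  ring

theorem norm_sq_opC (x : E) :
    ‖opC x‖ ^ 2 = 5 * ‖x 0‖ ^ 2 + 2 * ‖x 1‖ ^ 2 + 6 * (x 0 * conj (x 1)).re := by
  have := norm_sq_toEuclideanCLM_ofReal 2 1 1 1 x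
  push_cast at this
  rw [opC, this]
  ring

theorem norm_sq_opU (x : E) :
    ‖opU x‖ ^ 2 = (14 + 6 * √5) * ‖x 0‖ ^ 2 + 3121 / 400 * ‖x 1‖ ^ 2
      + (6 + 18 * √5 / 5) * (x 0 * conj (x 1)).re := by
  have := norm_sq_toEuclideanCLM_ofReal (3 + √5) (3 * √5 / 5) 0 (49 / 20) x
  push_cast at this
  rw [opU, this]
  linear_combination (‖x 0‖ ^ 2 + 9 / 25 * ‖x 1‖ ^ 2 + 6 / 5 * (x 0 * conj (x 1)).re) *
    Real.sq_sqrt (by norm_num : (0 : ℝ) ≤ 5)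

theorem norm_opU_le (x : E) : ‖opU x‖ ≤ ‖x‖ + ‖opA x‖ + ‖opC x‖ := by
  have hs : |(x 0 * conj (x 1)).re| ≤ ‖x 0‖ * ‖x 1‖ := by
    simpa using Complex.abs_re_le_norm (x 0 * conj (x 1))
  have := sqrt_le_sum_sqrt (norm_nonneg _) (norm_nonneg _) hs
  simp only [← norm_sq_fin_two, ← norm_sq_opA, ← norm_sq_opC, ← norm_sq_opU,
    Real.sqrt_sq (norm_nonneg _)] at this
  exact this

section Decomposition

variable {U₁ U₂ U₃ : E →L[ℂ] E}

theorem re_apply_le_norm {ι : Type*} [Fintype ι] (v : EuclideanSpace ℂ ι) (i : ι) :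
    (v i).re ≤ ‖v‖ :=
  (Complex.re_le_norm _).trans (PiLp.norm_apply_le v i)

theorem norm_opC_single_zero : ‖opC e₀‖ = √5 := by
  rw [← Real.sqrt_sq (norm_nonneg _), norm_sq_opC]
  norm_num

theorem apply_single_zero_eq_of_decomposition (hsum : opU = U₁ + U₂ + U₃)
    (h₁ : ∀ x, ‖U₁ x‖ ≤ ‖x‖) (h₂ : ∀ x, ‖U₂ x‖ ≤ ‖opA x‖) (h₃ : ∀ x, ‖U₃ x‖ ≤ ‖opC x‖) :
    U₃ e₀ = (√5 : ℂ) • e₀ := by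
  have hU : (opU e₀ 0).re = 3 + √5 := by
    simp [opU, toEuclideanCLM_fin_two_apply_zero]
  have hsplit : (opU e₀ 0).re = (U₁ e₀ 0).re + (U₂ e₀ 0).re + (U₃ e₀ 0).re := by
    simp [hsum]
  have hA : ‖opA e₀‖ = 2 := by
    rw [← Real.sqrt_sq (norm_nonneg _), norm_sq_opA]
    norm_num
  have hle₃ := (h₃ e₀).trans_eq norm_opC_single_zero
  have he : ‖e₀‖ = 1 := by simp
  refine eq_smul_of_norm_le_of_re_inner_eq he hle₃ ?_
  rw [EuclideanSpace.inner_single_left, map_one, one_mul, RCLike.re_to_complex]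
  linarith [re_apply_le_norm (U₁ e₀) 0, re_apply_le_norm (U₂ e₀) 0, re_apply_le_norm (U₃ e₀) 0,
    (h₁ e₀).trans_eq he, (h₂ e₀).trans_eq hA]

theorem inner_opC_single_zero_single_one : inner ℂ (opC e₀) (opC e₁) = 3 := by
  simp [PiLp.inner_apply, Fin.sum_univ_two, opC, map_ofNat]
  norm_num

theorem norm_sq_apply_single_one_one_le (h₃ : ∀ x, ‖U₃ x‖ ≤ ‖opC x‖)
    (h₀ : U₃ e₀ = (√5 : ℂ) • e₀) : ‖U₃ e₁ 1‖ ^ 2 ≤ 1 / 5 := by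
  have hr : √5 ^ 2 = 5 := Real.sq_sqrt (by norm_num)
  have heq : ‖U₃ e₀‖ = ‖opC e₀‖ := by
    rw [h₀, norm_opC_single_zero, norm_smul]
    simp
  have hvar := inner_map_map_eq_of_norm_le_of_norm_eq h₃ heq e₁
  rw [h₀, inner_smul_left, EuclideanSpace.inner_single_left, inner_opC_single_zero_single_one,
    Complex.conj_ofReal, map_one, one_mul] at hvar
  have hfirst : ‖U₃ e₁ 0‖ ^ 2 = 9 / 5 := by
    have := congrArg (‖·‖ ^ 2) hvar
    simp only [norm_mul, mul_pow, Complex.norm_real, Real.norm_eq_abs, sq_abs, hr] at this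
    norm_num at this
    linarith
  have hC : ‖opC e₁‖ ^ 2 = 2 := by
    rw [norm_sq_opC]
    norm_num
  have := pow_le_pow_left₀ (norm_nonneg _) (h₃ e₁) 2
  rw [norm_sq_fin_two, hC, hfirst] at this
  linarith

theorem false_of_decomposition (hsum : opU = U₁ + U₂ + U₃)
    (h₁ : ∀ x, ‖U₁ x‖ ≤ ‖x‖) (h₂ : ∀ x, ‖U₂ x‖ ≤ ‖opA x‖) (h₃ : ∀ x, ‖U₃ x‖ ≤ ‖opC x‖) :
    False := by
  have hsecond := norm_sq_apply_single_one_one_le h₃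
    (apply_single_zero_eq_of_decomposition hsum h₁ h₂ h₃)
  have hA : ‖opA e₁‖ = 1 := by
    rw [← Real.sqrt_sq (norm_nonneg _), norm_sq_opA]
    norm_num
  have hsplit : opU e₁ 1 = U₁ e₁ 1 + U₂ e₁ 1 + U₃ e₁ 1 := by
    simp [hsum]
  have : (49 / 20 : ℝ) ≤ 1 + 1 + ‖U₃ e₁ 1‖ :=
    calc (49 / 20 : ℝ) = ‖opU e₁ 1‖ := by
          simp [opU, toEuclideanCLM_fin_two_apply_one]
      _ ≤ ‖U₁ e₁ 1‖ + ‖U₂ e₁ 1‖ + ‖U₃ e₁ 1‖ := hsplit ▸ norm_add₃_le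
      _ ≤ 1 + 1 + ‖U₃ e₁ 1‖ := by
          gcongr
          · exact (PiLp.norm_apply_le _ _).trans ((h₁ e₁).trans_eq (by simp))
          · exact (PiLp.norm_apply_le _ _).trans ((h₂ e₁).trans_eq hA)
  nlinarith [norm_nonneg (U₃ e₁ 1)]

end Decomposition

end CounterexampleThreeTerms

open CounterexampleThreeTerms in
/-- **Counterexample to decomposition into three terms**: for `A = [[2,0],[0,1]]` and
`C = [[2,1],[1,1]]` on `ℂ²` there is a bounded operator `U` with
`|⟨Ux,y⟩| ≤ ‖x‖‖y‖ + ‖Ax‖‖y‖ + ‖Cx‖‖y‖` for all `x, y`, which admits no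
decomposition `U = U₁ + U₂ + U₃` with `|⟨U₁x,y⟩| ≤ ‖x‖‖y‖`,
`|⟨U₂x,y⟩| ≤ ‖Ax‖‖y‖` and `|⟨U₃x,y⟩| ≤ ‖Cx‖‖y‖`. -/
theorem exists_counterexample_three_terms :
    ∃ U : EuclideanSpace ℂ (Fin 2) →L[ℂ] EuclideanSpace ℂ (Fin 2),
      (∀ x y : EuclideanSpace ℂ (Fin 2),
        ‖(inner ℂ (U x) y : ℂ)‖ ≤ ‖x‖ * ‖y‖ + ‖opA x‖ * ‖y‖ + ‖opC x‖ * ‖y‖) ∧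
      ¬ ∃ U₁ U₂ U₃ : EuclideanSpace ℂ (Fin 2) →L[ℂ] EuclideanSpace ℂ (Fin 2),
          U = U₁ + U₂ + U₃ ∧
          (∀ x y : EuclideanSpace ℂ (Fin 2), ‖(inner ℂ (U₁ x) y : ℂ)‖ ≤ ‖x‖ * ‖y‖) ∧
          (∀ x y : EuclideanSpace ℂ (Fin 2), ‖(inner ℂ (U₂ x) y : ℂ)‖ ≤ ‖opA x‖ * ‖y‖) ∧
          (∀ x y : EuclideanSpace ℂ (Fin 2), ‖(inner ℂ (U₃ x) y : ℂ)‖ ≤ ‖opC x‖ * ‖y‖) := by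
  refine ⟨opU, fun x y => ?_, ?_⟩
  · calc ‖(inner ℂ (opU x) y : ℂ)‖ ≤ ‖opU x‖ * ‖y‖ := norm_inner_le_norm _ _
      _ ≤ (‖x‖ + ‖opA x‖ + ‖opC x‖) * ‖y‖ := by gcongr; exact norm_opU_le x
      _ = ‖x‖ * ‖y‖ + ‖opA x‖ * ‖y‖ + ‖opC x‖ * ‖y‖ := by ring
  · rintro ⟨U₁, U₂, U₃, hsum, h₁, h₂, h₃⟩
    exact false_of_decomposition hsum
      (fun x => norm_le_of_forall_norm_inner_le (norm_nonneg _) (h₁ x))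
      (fun x => norm_le_of_forall_norm_inner_le (norm_nonneg _) (h₂ x))
      (fun x => norm_le_of_forall_norm_inner_le (norm_nonneg _) (h₃ x))
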